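/- For h ∈ {3, 5, 6, 7, 8, 9}, the number of Fink–Mao region words of length h of unknot type (including the word L,R,C for h = 3) is: 1 for h = 3, and 2 for each h ∈ {5, 6, 7, 8, 9}; hence exactly 11 of the 85 Fink–Mao tie sequences of lengths 3 through 9 are of unknot type, and there is no unknot-type word of length 4. -/

import Mathlib

/-- A region of the tie diagram: left, right, or center. -/
inductive Region : Type
  | L | R | C
deriving DecidableEq

open Region

/-- A Fink–Mao region word: a list of letters from {L, R, C} with consecutive
letters distinct, first letter `L`, ending with the suffix `L,R,C` or `R,L,C`. -/
def FMWord (w : List Region) : Prop :=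
  w.Chain' (· ≠ ·) ∧ w.head? = some L ∧
    ([L, R, C] <:+ w ∨ [R, L, C] <:+ w)

/-- Swap `L` and `R` (fixing `C`). -/
def other : Region → Region
  | L => R
  | R => L
  | C => C

/-- `altWord s n` is the alternating word of length `n` starting with letter `s`. -/
def altWord : Region → ℕ → List Region
  | _, 0 => []
  | s, n + 1 => s :: altWord (other s) n

/-- A word is of unknot type if it equals `L,R,C`, or has the form `g ++ [C, X, Y, C]`
with `g` a nonempty alternating L/R word starting with `L` and `(X, Y)` equal to
`(R, L)` or `(L, R)`. -/
def UnknotType (w : List Region) : Prop :=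
  w = [L, R, C] ∨
    ∃ (n : ℕ) (X Y : Region), w = altWord L (n + 1) ++ [C, X, Y, C] ∧
      ((X = R ∧ Y = L) ∨ (X = L ∧ Y = R))

/-- `U h` is the number of Fink–Mao region words of length `h` of unknot type. -/
noncomputable def U (h : ℕ) : ℕ :=
  Nat.card {w : List Region // FMWord w ∧ w.length = h ∧ UnknotType w}

/-! An unknot-type word is either `L,R,C` (length 3) or `altWord L (n+1) ++ [C, X, Y, C]`, of
length `n + 5`, with two choices of `(X, Y)`; every such word is automatically a Fink–Mao word. -/

lemma other_ne_C {s : Region} (hs : s ≠ C) : other s ≠ C := by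
  cases s <;> simp_all [other]

lemma other_ne_self {s : Region} (hs : s ≠ C) : other s ≠ s := by
  cases s <;> simp_all [other]

lemma length_altWord (s : Region) (n : ℕ) : (altWord s n).length = n := by
  induction n generalizing s with
  | zero => rfl
  | succ n ih => simp [altWord, ih]

lemma C_not_mem_altWord {s : Region} (hs : s ≠ C) (n : ℕ) : C ∉ altWord s n := by
  induction n generalizing s with
  | zero => simp [altWord]
  | succ n ih => simpa [altWord, Ne.symm hs] using ih (other_ne_C hs)

lemma isChain_altWord {s : Region} (hs : s ≠ C) (n : ℕ) : (altWord s n).IsChain (· ≠ ·) := by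
  induction n generalizing s with
  | zero => exact List.IsChain.nil
  | succ n ih =>
    refine List.isChain_cons.mpr ⟨?_, ih (other_ne_C hs)⟩
    cases n with
    | zero => simp [altWord]
    | succ n => simpa [altWord] using (other_ne_self hs).symm

lemma fmWord_altWord_append (n : ℕ) {X Y : Region}
    (hXY : (X = R ∧ Y = L) ∨ (X = L ∧ Y = R)) :
    FMWord (altWord L (n + 1) ++ [C, X, Y, C]) := by
  refine ⟨?_, rfl, ?_⟩
  · refine List.isChain_append.mpr ⟨isChain_altWord (by decide) _, ?_, ?_⟩
    · rcases hXY with ⟨rfl, rfl⟩ | ⟨rfl, rfl⟩ <;> simp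
    · intro x hx y hy
      obtain rfl : C = y := by simpa using hy
      rintro rfl
      exact C_not_mem_altWord (by decide) _ (List.mem_of_mem_getLast? hx)
  · rcases hXY with ⟨rfl, rfl⟩ | ⟨rfl, rfl⟩
    · exact .inr ((List.suffix_cons C _).trans (List.suffix_append _ _))
    · exact .inl ((List.suffix_cons C _).trans (List.suffix_append _ _))

lemma UnknotType.fmWord {w : List Region} (hw : UnknotType w) : FMWord w := by
  rcases hw with rfl | ⟨n, X, Y, rfl, hXY⟩
  · exact ⟨(by simp : [L, R, C].IsChain (· ≠ ·)), rfl, .inl List.suffix_rfl⟩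
  · exact fmWord_altWord_append n hXY

lemma U_eq_ncard (h : ℕ) : U h = {w : List Region | w.length = h ∧ UnknotType w}.ncard := by
  refine congrArg Set.ncard (Set.ext fun w => ?_)
  exact ⟨fun ⟨_, hw⟩ => hw, fun hw => ⟨hw.2.fmWord, hw⟩⟩

lemma setOf_unknotType_length_three :
    {w : List Region | w.length = 3 ∧ UnknotType w} = {[L, R, C]} := by
  ext w
  constructor
  · rintro ⟨hlen, rfl | ⟨n, X, Y, rfl, -⟩⟩
    · rfl
    · simp [length_altWord] at hlen
  · rintro rfl
    exact ⟨rfl, .inl rfl⟩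

lemma setOf_unknotType_length_four :
    {w : List Region | w.length = 4 ∧ UnknotType w} = ∅ := by
  ext w
  simp only [Set.mem_ofPred_eq, Set.mem_empty_iff_false, iff_false, not_and]
  rintro hlen (rfl | ⟨n, X, Y, rfl, -⟩) <;> simp [length_altWord] at hlen

lemma setOf_unknotType_length_add_five (n : ℕ) :
    {w : List Region | w.length = n + 5 ∧ UnknotType w} =
      {altWord L (n + 1) ++ [C, R, L, C], altWord L (n + 1) ++ [C, L, R, C]} := by
  ext w
  constructor
  · rintro ⟨hlen, rfl | ⟨m, X, Y, rfl, hXY⟩⟩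
    · simp at hlen
    · obtain rfl : m = n := by simp [length_altWord] at hlen; omega
      rcases hXY with ⟨rfl, rfl⟩ | ⟨rfl, rfl⟩
      exacts [.inl rfl, .inr rfl]
  · rintro (rfl | rfl)
    · exact ⟨by simp [length_altWord], .inr ⟨n, R, L, rfl, .inl ⟨rfl, rfl⟩⟩⟩
    · exact ⟨by simp [length_altWord], .inr ⟨n, L, R, rfl, .inr ⟨rfl, rfl⟩⟩⟩

lemma U_three : U 3 = 1 := by
  rw [U_eq_ncard, setOf_unknotType_length_three, Set.ncard_singleton]

lemma U_four : U 4 = 0 := by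
  rw [U_eq_ncard, setOf_unknotType_length_four, Set.ncard_empty]

lemma U_add_five (n : ℕ) : U (n + 5) = 2 := by
  rw [U_eq_ncard, setOf_unknotType_length_add_five]
  exact Set.ncard_pair (by simp)

/-- The number of unknot-type Fink–Mao region words of length `h` is 1 for `h = 3`,
0 for `h = 4`, and 2 for each `h ∈ {5, 6, 7, 8, 9}`; hence exactly 11 of the 85
Fink–Mao tie sequences of lengths 3 through 9 are of unknot type. -/
theorem count_unknots :
    U 3 = 1 ∧ U 4 = 0 ∧ U 5 = 2 ∧ U 6 = 2 ∧ U 7 = 2 ∧ U 8 = 2 ∧ U 9 = 2 ∧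
    (∑ h ∈ Finset.Icc 3 9, U h) = 11 := by
  have h5 := U_add_five 0
  have h6 := U_add_five 1
  have h7 := U_add_five 2
  have h8 := U_add_five 3
  have h9 := U_add_five 4
  refine ⟨U_three, U_four, h5, h6, h7, h8, h9, ?_⟩
  simp [Finset.sum_Icc_succ_top, U_three, U_four, h5, h6, h7, h8, h9]
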